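/- For every integer k ≥ 2 there exists a finite simple connected graph G = (V,E) which is regular of degree 5, has |V| = 6k vertices, and whose generic rank satisfies r(G) = 10k. In particular, for this class of graphs r(G) = (5/3)·|V|, so the order of the lower bound r(G) ≥ (5/3)·|V| − 1 for 5-regular connected graphs is sharp. -/

import Mathlib

noncomputable section

open Classical in
/-- The edge vector of the pair `(i, j)` under the realization `p`: the function `V → ℝ × ℝ`
whose value is `p i - p j` at `i`, `p j - p i` at `j`, and `0` elsewhere. -/
def edgeVec {V : Type*} (p : V → ℝ × ℝ) (i j : V) : V → ℝ × ℝ :=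
  fun v => if v = i then p i - p j else if v = j then p j - p i else 0

/-- The set of edge vectors of a set `F` of (potential) edges under the realization `p`. -/
def edgeVecs {V : Type*} (p : V → ℝ × ℝ) (F : Set (Sym2 V)) : Set (V → ℝ × ℝ) :=
  {x | ∃ i j, s(i, j) ∈ F ∧ x = edgeVec p i j}

/-- The rank of the edge vectors of `F` under the realization `p`. -/
def rankOf {V : Type*} (p : V → ℝ × ℝ) (F : Set (Sym2 V)) : ℕ :=
  Module.finrank ℝ (Submodule.span ℝ (edgeVecs p F))

/-- The generic rank of a set of edges: the maximum over all realizations `p` of the rank. -/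
def genRankSet {V : Type*} (F : Set (Sym2 V)) : ℕ :=
  ⨆ p : V → ℝ × ℝ, rankOf p F

/-- The generic rank `r(G)` of a graph. -/
def genRank {V : Type*} (G : SimpleGraph V) : ℕ := genRankSet G.edgeSet

/-- The stress number `s_p(F)` of a set of edges under the realization `p`
(the dimension of the space of resolvable stresses). -/
def stressNum {V : Type*} (p : V → ℝ × ℝ) (F : Set (Sym2 V)) : ℕ :=
  F.ncard - rankOf p F

/-- The generic stress number `s(F)` of a set of edges. -/
def genStressSet {V : Type*} (F : Set (Sym2 V)) : ℕ := F.ncard - genRankSet F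

/-- The generic stress number `s(G)` of a graph. -/
def genStress {V : Type*} (G : SimpleGraph V) : ℕ := G.edgeSet.ncard - genRank G

/-- A planar configuration is in general position if it is injective and no three distinct
vertices have collinear images. -/
def GeneralPosition {V : Type*} (p : V → ℝ × ℝ) : Prop :=
  Function.Injective p ∧
    ∀ i j k : V, i ≠ j → j ≠ k → i ≠ k →
      ¬ Collinear ℝ ({p i, p j, p k} : Set (ℝ × ℝ))

/-- `W_U`: the subspace of functions `V → ℝ × ℝ` vanishing at every vertex outside `U`. -/
def vanishOn {V : Type*} (U : Set V) : Submodule ℝ (V → ℝ × ℝ) where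
  carrier := {f | ∀ v ∉ U, f v = 0}
  zero_mem' := fun v _ => rfl
  add_mem' := by
    intro a b ha hb v hv
    simp [Pi.add_apply, ha v hv, hb v hv]
  smul_mem' := by
    intro c f hf v hv
    simp [Pi.smul_apply, hf v hv]

end

/-!
Let block `i`, for `i : ZMod k`, be a copy of `K₆` minus the edge `{2, 3}`, and join the blocks
into a cycle by the links `(3, i) — (2, i + 1)`; the result is connected and 5-regular.

Upper bound: the edge vectors of a block are self-equilibrated loads on its six vertices (zero net
force and zero torque), a space of dimension at most `2 · 6 - 3 = 9`, so a block with its link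
contributes at most `10`.

Lower bound: put block `i` on the parabola `y = x²` raised by `i`. Each block contains the book
graph on the edge `{0, 1}` with pages `2, …, 5`, built by 0-extensions, hence of rank `9`, and the
blocks are vertex-disjoint. The torque of block `i` about its vertex `2` vanishes on all of these
edges and on every link except link `i`, so the `k` links raise the rank by `k`.
-/

open Module Submodule

section EdgeVectors

variable {V : Type*} (p : V → ℝ × ℝ)

lemma edgeVec_comm (a b : V) : edgeVec p a b = edgeVec p b a := by
  funext v
  unfold edgeVec
  split_ifs <;> simp_all

lemma edgeVec_apply_of_ne {a b v : V} (ha : v ≠ a) (hb : v ≠ b) : edgeVec p a b v = 0 := by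
  simp [edgeVec, ha, hb]

lemma edgeVec_eq_zero_of_eq {a b : V} (h : p a = p b) : edgeVec p a b = 0 := by
  funext v
  simp [edgeVec, h]

lemma edgeVec_eq_single_add_single [DecidableEq V] {a b : V} (hab : a ≠ b) :
    edgeVec p a b = Pi.single a (p a - p b) + Pi.single b (p b - p a) := by
  funext v
  unfold edgeVec
  by_cases ha : v = a <;> by_cases hb : v = b <;> simp_all

@[simp] lemma edgeVecs_empty : edgeVecs p ∅ = ∅ := by
  ext
  simp [edgeVecs]

lemma edgeVecs_union (F F' : Set (Sym2 V)) :
    edgeVecs p (F ∪ F') = edgeVecs p F ∪ edgeVecs p F' := by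
  ext x
  simp only [edgeVecs, Set.mem_union, Set.mem_ofPred_eq]
  grind

lemma edgeVecs_biUnion {ι : Type*} (s : Finset ι) (F : ι → Set (Sym2 V)) :
    edgeVecs p (⋃ i ∈ s, F i) = ⋃ i ∈ s, edgeVecs p (F i) := by
  ext x
  simp only [edgeVecs, Set.mem_iUnion, Set.mem_ofPred_eq]
  grind

lemma edgeVecs_mono {F F' : Set (Sym2 V)} (h : F ⊆ F') : edgeVecs p F ⊆ edgeVecs p F' :=
  fun _ ⟨i, j, hij, hx⟩ => ⟨i, j, h hij, hx⟩

lemma edgeVecs_image_mk (v : V) (N : Set V) :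
    edgeVecs p ((fun w => s(v, w)) '' N) = edgeVec p v '' N := by
  ext x
  simp only [edgeVecs, Set.mem_image, Set.mem_ofPred_eq, Sym2.eq_iff]
  constructor
  · rintro ⟨i, j, ⟨w, hw, (⟨rfl, rfl⟩ | ⟨rfl, rfl⟩)⟩, rfl⟩
    exacts [⟨w, hw, rfl⟩, ⟨w, hw, edgeVec_comm p _ _⟩]
  · rintro ⟨w, hw, rfl⟩
    exact ⟨v, w, ⟨w, hw, Or.inl ⟨rfl, rfl⟩⟩, rfl⟩

lemma edgeVecs_singleton (a b : V) : edgeVecs p {s(a, b)} = {edgeVec p a b} := by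
  simpa using edgeVecs_image_mk p a {b}

lemma rankOf_singleton_le (e : Sym2 V) : rankOf p {e} ≤ 1 := by
  induction e using Sym2.ind with
  | h a b =>
    unfold rankOf
    rw [edgeVecs_singleton]
    exact (finrank_span_le_card _).trans (by simp)

def book (a b : V) (T : Finset V) : Set (Sym2 V) :=
  insert s(a, b) (⋃ t ∈ T, {s(t, a), s(t, b)})

lemma mem_of_mem_book {a b v : V} {T : Finset V} {e : Sym2 V} (he : e ∈ book a b T)
    (hv : v ∈ e) : v ∈ insert a (insert b (T : Set V)) := by
  simp only [book, Set.mem_insert_iff, Set.mem_iUnion, Set.mem_singleton_iff] at he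
  rcases he with rfl | ⟨t, ht, rfl | rfl⟩ <;> rcases Sym2.mem_iff.mp hv with rfl | rfl <;>
    simp_all

end EdgeVectors

lemma finrank_map_add_finrank_inf_ker {K M N : Type*} [DivisionRing K] [AddCommGroup M]
    [Module K M] [AddCommGroup N] [Module K N] (f : M →ₗ[K] N) (W : Submodule K M)
    [FiniteDimensional K W] :
    finrank K (W.map f) + finrank K (W ⊓ LinearMap.ker f : Submodule K M) = finrank K W := by
  have h := LinearMap.finrank_range_add_finrank_ker (f.domRestrict W)
  rwa [LinearMap.range_domRestrict, LinearMap.ker_domRestrict, ← finrank_map_subtype_eq,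
    map_comap_subtype] at h

section Rank

variable {V : Type*} [Finite V] (p : V → ℝ × ℝ)

lemma rankOf_mono {F F' : Set (Sym2 V)} (h : F ⊆ F') : rankOf p F ≤ rankOf p F' :=
  finrank_mono (span_mono (edgeVecs_mono p h))

lemma rankOf_union_le (F F' : Set (Sym2 V)) : rankOf p (F ∪ F') ≤ rankOf p F + rankOf p F' := by
  unfold rankOf
  rw [edgeVecs_union, span_union]
  exact finrank_add_le_finrank_add_finrank _ _

lemma rankOf_biUnion_le {ι : Type*} [DecidableEq ι] (s : Finset ι) (F : ι → Set (Sym2 V)) :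
    rankOf p (⋃ i ∈ s, F i) ≤ ∑ i ∈ s, rankOf p (F i) := by
  induction s using Finset.induction_on with
  | empty => simp [rankOf]
  | insert j s hj ih =>
    rw [Finset.set_biUnion_insert, Finset.sum_insert hj]
    exact (rankOf_union_le p _ _).trans (by omega)

lemma rankOf_add_finrank_map_le_rankOf_union {N : Type*} [AddCommGroup N] [Module ℝ N]
    (f : (V → ℝ × ℝ) →ₗ[ℝ] N) {F : Set (Sym2 V)} (hF : edgeVecs p F ⊆ LinearMap.ker f)
    (F' : Set (Sym2 V)) :
    rankOf p F + finrank ℝ ((span ℝ (edgeVecs p F')).map f) ≤ rankOf p (F ∪ F') := by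
  set S := span ℝ (edgeVecs p (F ∪ F'))
  have hS : S = span ℝ (edgeVecs p F) ⊔ span ℝ (edgeVecs p F') := by
    rw [← span_union, ← edgeVecs_union]
  have hF_le : span ℝ (edgeVecs p F) ≤ S ⊓ LinearMap.ker f :=
    le_inf (hS ▸ le_sup_left) (span_le.mpr hF)
  have hF'_le : (span ℝ (edgeVecs p F')).map f ≤ S.map f := map_mono (hS ▸ le_sup_right)
  calc rankOf p F + finrank ℝ ((span ℝ (edgeVecs p F')).map f)
      ≤ finrank ℝ (S.map f) + finrank ℝ (S ⊓ LinearMap.ker f : Submodule ℝ _) := by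
        rw [add_comm]
        exact add_le_add (finrank_mono hF'_le) (finrank_mono hF_le)
    _ = rankOf p (F ∪ F') := finrank_map_add_finrank_inf_ker f S

lemma rankOf_add_finrank_le_rankOf_union_star {F : Set (Sym2 V)} {v : V}
    (hv : ∀ e ∈ F, v ∉ e) (N : Set V) :
    rankOf p F + finrank ℝ (span ℝ ((fun w => p v - p w) '' N)) ≤
      rankOf p (F ∪ (fun w => s(v, w)) '' N) := by
  have hF : edgeVecs p F ⊆ LinearMap.ker (LinearMap.proj v : (V → ℝ × ℝ) →ₗ[ℝ] ℝ × ℝ) := by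
    rintro _ ⟨a, b, hab, rfl⟩
    have hvab := hv _ hab
    rw [Sym2.mem_iff, not_or] at hvab
    exact edgeVec_apply_of_ne p hvab.1 hvab.2
  have hmap : (span ℝ (edgeVecs p ((fun w => s(v, w)) '' N))).map (LinearMap.proj v) =
      span ℝ ((fun w => p v - p w) '' N) := by
    rw [map_span, edgeVecs_image_mk, Set.image_image]
    simp [edgeVec]
  rw [← hmap]
  exact rankOf_add_finrank_map_le_rankOf_union p _ hF _

lemma rankOf_add_le_rankOf_union_book [DecidableEq V] {F : Set (Sym2 V)} {a b : V}
    {T : Finset V} (hF : ∀ e ∈ F, ∀ v ∈ e, v ∉ insert a (insert b (T : Set V)))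
    (hab : p a ≠ p b) (hT : ∀ t ∈ T, LinearIndependent ℝ ![p t - p a, p t - p b]) :
    rankOf p F + (2 * T.card + 1) ≤ rankOf p (F ∪ book a b T) := by
  induction T using Finset.induction_on with
  | empty =>
    have h := rankOf_add_finrank_le_rankOf_union_star p
      (fun e he hae => hF e he a hae (by simp)) {b}
    rw [Set.image_singleton, Set.image_singleton, finrank_span_singleton (sub_ne_zero.mpr hab)]
      at h
    simpa [book] using h
  | insert t T ht ih =>
    have hbook : book a b (insert t T) = book a b T ∪ (fun w => s(t, w)) '' {a, b} := by
      ext e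
      simp only [book, Set.image_pair, Finset.set_biUnion_insert, Set.mem_insert_iff,
        Set.mem_union]
      tauto
    have hind := hT t (Finset.mem_insert_self t T)
    have hta : t ≠ a := fun h => hind.ne_zero 0 (by simp [h])
    have htb : t ≠ b := fun h => hind.ne_zero 1 (by simp [h])
    have htF : ∀ e ∈ F ∪ book a b T, t ∉ e := by
      rintro e (he | he) hte
      · exact hF e he t hte (by simp)
      · rcases mem_of_mem_book he hte with h | h | h
        exacts [hta h, htb h, ht h]
    have h := rankOf_add_finrank_le_rankOf_union_star p htF {a, b}
    rw [Set.image_pair, ← Matrix.range_cons_cons_empty _ _ ![], finrank_span_eq_card hind] at h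
    have h' := ih (fun e he v hv hvT => hF e he v hv (by simp at hvT ⊢; tauto))
      (fun t' ht' => hT t' (Finset.mem_insert_of_mem ht'))
    rw [hbook, ← Set.union_assoc, Finset.card_insert_of_notMem ht]
    simp only [Fintype.card_fin] at h
    omega

lemma rankOf_add_card_le_rankOf_union {ι : Type*} [DecidableEq ι]
    {F : Set (Sym2 V)} (s : Finset ι) (a b : ι → V) (φ : ι → Module.Dual ℝ (V → ℝ × ℝ))
    (hF : ∀ i ∈ s, edgeVecs p F ⊆ LinearMap.ker (φ i))
    (hoff : ∀ i ∈ s, ∀ j ∈ s, j ≠ i → φ i (edgeVec p (a j) (b j)) = 0)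
    (hdiag : ∀ i ∈ s, φ i (edgeVec p (a i) (b i)) ≠ 0) :
    rankOf p F + s.card ≤ rankOf p (F ∪ ⋃ i ∈ s, {s(a i, b i)}) := by
  induction s using Finset.induction_on with
  | empty => simp
  | insert j s hj ih =>
    have hker : edgeVecs p (F ∪ ⋃ i ∈ s, {s(a i, b i)}) ⊆ LinearMap.ker (φ j) := by
      rw [edgeVecs_union, edgeVecs_biUnion]
      refine Set.union_subset (hF j (Finset.mem_insert_self j s)) ?_
      simp only [edgeVecs_singleton, Set.iUnion_subset_iff, Set.singleton_subset_iff]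
      exact fun i hi => hoff j (Finset.mem_insert_self j s) i (Finset.mem_insert_of_mem hi)
        (ne_of_mem_of_not_mem hi hj)
    have h := rankOf_add_finrank_map_le_rankOf_union p (φ j) hker {s(a j, b j)}
    rw [edgeVecs_singleton, map_span, Set.image_singleton,
      finrank_span_singleton (hdiag j (Finset.mem_insert_self j s))] at h
    have h' := ih (fun i hi => hF i (Finset.mem_insert_of_mem hi))
      (fun i hi k hk => hoff i (Finset.mem_insert_of_mem hi) k (Finset.mem_insert_of_mem hk))
      (fun i hi => hdiag i (Finset.mem_insert_of_mem hi))
    rw [Finset.set_biUnion_insert, Finset.card_insert_of_notMem hj, Set.union_comm {_},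
      ← Set.union_assoc]
    omega

end Rank

def wedge : ℝ × ℝ →ₗ[ℝ] ℝ × ℝ →ₗ[ℝ] ℝ :=
  LinearMap.mk₂ ℝ (fun x y => x.1 * y.2 - x.2 * y.1)
    (fun _ _ _ => by simp only [Prod.fst_add, Prod.snd_add]; ring)
    (fun _ _ _ => by simp only [Prod.smul_fst, Prod.smul_snd, smul_eq_mul]; ring)
    (fun _ _ _ => by simp only [Prod.fst_add, Prod.snd_add]; ring)
    (fun _ _ _ => by simp only [Prod.smul_fst, Prod.smul_snd, smul_eq_mul]; ring)

lemma wedge_apply (x y : ℝ × ℝ) : wedge x y = x.1 * y.2 - x.2 * y.1 := rfl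

lemma exists_wedge_eq {d : ℝ × ℝ} (hd : d ≠ 0) (t : ℝ) : ∃ z, wedge z d = t := by
  have hn : d.1 ^ 2 + d.2 ^ 2 ≠ 0 := by
    contrapose! hd
    have h₁ : d.1 = 0 := by nlinarith [sq_nonneg d.1, sq_nonneg d.2]
    have h₂ : d.2 = 0 := by nlinarith [sq_nonneg d.1, sq_nonneg d.2]
    exact Prod.ext h₁ h₂
  refine ⟨(t / (d.1 ^ 2 + d.2 ^ 2)) • (d.2, -d.1), ?_⟩
  simp only [wedge_apply, Prod.smul_fst, Prod.smul_snd, smul_eq_mul]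
  field_simp
  ring

lemma linearIndependent_pair_of_wedge_ne_zero {x y : ℝ × ℝ} (h : wedge x y ≠ 0) :
    LinearIndependent ℝ ![x, y] := by
  rw [LinearIndependent.pair_iff]
  intro s t hst
  have h₁ : s * x.1 + t * y.1 = 0 := by simpa using congrArg Prod.fst hst
  have h₂ : s * x.2 + t * y.2 = 0 := by simpa using congrArg Prod.snd hst
  rw [wedge_apply] at h
  constructor
  · apply (mul_eq_zero.mp _).resolve_right h
    linear_combination y.2 * h₁ - y.1 * h₂
  · apply (mul_eq_zero.mp _).resolve_right h
    linear_combination x.1 * h₂ - x.2 * h₁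

section Equilibrium

variable {V : Type*} (p : V → ℝ × ℝ) (U : Finset V)

def netForce : (V → ℝ × ℝ) →ₗ[ℝ] ℝ × ℝ := ∑ v ∈ U, LinearMap.proj v

def torque (c : ℝ × ℝ) : (V → ℝ × ℝ) →ₗ[ℝ] ℝ :=
  ∑ v ∈ U, wedge.flip (p v - c) ∘ₗ LinearMap.proj v

lemma netForce_single [DecidableEq V] (a : V) (z : ℝ × ℝ) :
    netForce U (Pi.single a z) = if a ∈ U then z else 0 := by
  simp [netForce, LinearMap.sum_apply, Finset.sum_pi_single']

lemma torque_single [DecidableEq V] (c : ℝ × ℝ) (a : V) (z : ℝ × ℝ) :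
    torque p U c (Pi.single a z) = if a ∈ U then wedge z (p a - c) else 0 := by
  simp only [torque, LinearMap.sum_apply, LinearMap.comp_apply, LinearMap.proj_apply,
    LinearMap.flip_apply]
  rw [← Finset.sum_pi_single']
  exact Finset.sum_congr rfl fun v _ =>
    Pi.apply_single (fun v x => wedge x (p v - c)) (fun _ => by simp) a z v

lemma netForce_edgeVec {a b : V} (ha : a ∈ U) (hb : b ∈ U) :
    netForce U (edgeVec p a b) = 0 := by
  classical
  obtain rfl | hab := eq_or_ne a b
  · simp [edgeVec_eq_zero_of_eq]
  rw [edgeVec_eq_single_add_single p hab, map_add, netForce_single, netForce_single, if_pos ha,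
    if_pos hb]
  abel

lemma torque_edgeVec_eq_zero {a b : V} (h : a ∈ U ↔ b ∈ U) (c : ℝ × ℝ) :
    torque p U c (edgeVec p a b) = 0 := by
  classical
  obtain rfl | hab := eq_or_ne a b
  · simp [edgeVec_eq_zero_of_eq]
  rw [edgeVec_eq_single_add_single p hab, map_add, torque_single, torque_single]
  by_cases ha : a ∈ U
  · rw [if_pos ha, if_pos (h.mp ha)]
    simp only [wedge_apply, Prod.fst_sub, Prod.snd_sub]
    ring
  · rw [if_neg ha, if_neg (mt h.mpr ha), add_zero]

lemma torque_edgeVec_of_mem_of_notMem {a b : V} (ha : a ∈ U) (hb : b ∉ U) (c : ℝ × ℝ) :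
    torque p U c (edgeVec p a b) = wedge (p a - p b) (p a - c) := by
  classical
  rw [edgeVec_eq_single_add_single p (ne_of_mem_of_not_mem ha hb), map_add, torque_single,
    torque_single, if_pos ha, if_neg hb, add_zero]

end Equilibrium

section Maxwell

variable {V : Type*} (p : V → ℝ × ℝ)

lemma single_mem_vanishOn [DecidableEq V] {U : Set V} {a : V} (ha : a ∈ U) (z : ℝ × ℝ) :
    Pi.single a z ∈ vanishOn U :=
  fun _ hv => by simp [(ne_of_mem_of_not_mem ha hv).symm]

lemma edgeVec_mem_vanishOn {U : Set V} {a b : V} (ha : a ∈ U) (hb : b ∈ U) :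
    edgeVec p a b ∈ vanishOn U :=
  fun _ hv =>
    edgeVec_apply_of_ne p (ne_of_mem_of_not_mem ha hv).symm (ne_of_mem_of_not_mem hb hv).symm

lemma finrank_vanishOn_le (U : Finset V) : finrank ℝ (vanishOn (U : Set V)) ≤ 2 * U.card := by
  let r : vanishOn (U : Set V) →ₗ[ℝ] (U → ℝ × ℝ) :=
    LinearMap.funLeft ℝ (ℝ × ℝ) Subtype.val ∘ₗ (vanishOn (U : Set V)).subtype
  have hr : Function.Injective r := by
    intro f g hfg
    ext1
    funext v
    by_cases hv : v ∈ U
    · exact congrFun hfg ⟨v, hv⟩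
    · rw [f.2 v hv, g.2 v hv]
  calc _ ≤ finrank ℝ (U → ℝ × ℝ) := LinearMap.finrank_le_finrank_of_injective hr
    _ = 2 * U.card := by simp [Module.finrank_pi_fintype, mul_comm]

lemma map_vanishOn_eq_top [DecidableEq V] (U : Finset V) {a b : V} (ha : a ∈ U) (hb : b ∈ U)
    (hab : p a ≠ p b) : (vanishOn (U : Set V)).map ((netForce U).prod (torque p U 0)) = ⊤ := by
  rw [eq_top_iff]
  rintro ⟨σ, r⟩ -
  obtain ⟨z, hz⟩ := exists_wedge_eq (sub_ne_zero.mpr hab) (r - wedge σ (p b))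
  refine ⟨Pi.single a z + Pi.single b (σ - z),
    add_mem (single_mem_vanishOn ha z) (single_mem_vanishOn hb _), ?_⟩
  simp only [LinearMap.prod_apply, Function.prod_apply, map_add, netForce_single,
    torque_single, if_pos ha, if_pos hb, sub_zero, map_sub, LinearMap.sub_apply] at hz ⊢
  refine Prod.ext (by simp) ?_
  simp only [Prod.snd_add]
  linarith

/-- Maxwell's count: the edge vectors inside `U` lie in `W_U` and in the kernel of the net force
and the torque, and these three conditions are independent on `W_U` unless `p` is constant
on `U`. -/
lemma rankOf_sym2_le [Finite V] (U : Finset V) :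
    rankOf p (U : Set V).sym2 ≤ 2 * U.card - 3 := by
  classical
  by_cases hconst : ∀ a ∈ U, ∀ b ∈ U, p a = p b
  · have hzero : ∀ x ∈ edgeVecs p (U : Set V).sym2, x = 0 := by
      rintro _ ⟨a, b, hab, rfl⟩
      rw [Set.mk_mem_sym2_iff] at hab
      exact edgeVec_eq_zero_of_eq p (hconst a hab.1 b hab.2)
    rw [rankOf, span_eq_bot.mpr hzero, finrank_bot]
    exact Nat.zero_le _
  push Not at hconst
  obtain ⟨a, ha, b, hb, hab⟩ := hconst
  set Φ := (netForce U).prod (torque p U 0)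
  have hle : span ℝ (edgeVecs p (U : Set V).sym2) ≤ vanishOn (U : Set V) ⊓ LinearMap.ker Φ := by
    rw [span_le]
    rintro _ ⟨u, v, huv, rfl⟩
    rw [Set.mk_mem_sym2_iff] at huv
    refine ⟨edgeVec_mem_vanishOn p huv.1 huv.2, ?_⟩
    simp [Φ, netForce_edgeVec p U huv.1 huv.2,
      torque_edgeVec_eq_zero p U (iff_of_true huv.1 huv.2)]
  have hrank := finrank_map_add_finrank_inf_ker Φ (vanishOn (U : Set V))
  rw [map_vanishOn_eq_top p U ha hb hab, finrank_top] at hrank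
  have h3 : finrank ℝ ((ℝ × ℝ) × ℝ) = 3 := by simp
  have := finrank_mono hle
  have := finrank_vanishOn_le U
  unfold rankOf
  omega

end Maxwell

section GenericRank

variable {V : Type*}

lemma genRankSet_eq_of_forall_le {F : Set (Sym2 V)} {n : ℕ} (hle : ∀ p, rankOf p F ≤ n)
    (p₀ : V → ℝ × ℝ) (h₀ : n ≤ rankOf p₀ F) : genRankSet F = n :=
  le_antisymm (ciSup_le hle) (h₀.trans (le_ciSup ⟨n, Set.forall_mem_range.mpr hle⟩ p₀))

lemma rankOf_comp_equiv {W : Type*} (e : V ≃ W) (p : W → ℝ × ℝ) (F : Set (Sym2 W)) :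
    rankOf (p ∘ e) (Sym2.map e ⁻¹' F) = rankOf p F := by
  let L := LinearEquiv.funCongrLeft ℝ (ℝ × ℝ) e
  have hL : ∀ a b, L (edgeVec p a b) = edgeVec (p ∘ e) (e.symm a) (e.symm b) := by
    intro a b
    funext v
    simp only [L, edgeVec, LinearEquiv.funCongrLeft_apply, LinearMap.funLeft_apply,
      Function.comp_apply, Equiv.apply_symm_apply]
    split_ifs <;> simp_all [Equiv.eq_symm_apply]
  have hvecs : edgeVecs (p ∘ e) (Sym2.map e ⁻¹' F) = L '' edgeVecs p F := by
    ext x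
    constructor
    · rintro ⟨a, b, hab, rfl⟩
      exact ⟨_, ⟨e a, e b, hab, rfl⟩, by simp [hL]⟩
    · rintro ⟨_, ⟨a, b, hab, rfl⟩, rfl⟩
      exact ⟨e.symm a, e.symm b, by simpa using hab, hL a b⟩
  rw [rankOf, hvecs, ← LinearEquiv.coe_toLinearMap, ← map_span, LinearEquiv.finrank_map_eq]
  rfl

lemma SimpleGraph.Iso.genRank_eq {W : Type*} {G : SimpleGraph V} {G' : SimpleGraph W}
    (φ : G ≃g G') : genRank G = genRank G' := by
  have hedges : G.edgeSet = Sym2.map φ ⁻¹' G'.edgeSet := by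
    ext e
    induction e using Sym2.ind
    simp [φ.map_adj_iff]
  have hsurj : Function.Surjective fun p : W → ℝ × ℝ => p ∘ φ :=
    fun q => ⟨q ∘ φ.symm, by funext v; simp⟩
  unfold genRank genRankSet
  rw [hedges, ← hsurj.iSup_comp]
  exact iSup_congr fun p => rankOf_comp_equiv φ.toEquiv p G'.edgeSet

end GenericRank

namespace BlockCycle

variable {k : ℕ}

/-- Vertex `(t, i)` is vertex `t` of block `i`; `offset` reroutes the edge `{2, 3}` of each block
as the link `(3, i) — (2, i + 1)`. -/
def offset (t s : Fin 6) : ZMod k :=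
  if t = 3 ∧ s = 2 then 1 else if t = 2 ∧ s = 3 then -1 else 0

lemma offset_swap (t s : Fin 6) : offset (k := k) s t = -offset t s := by
  unfold offset
  split_ifs <;> simp_all

def graph (k : ℕ) : SimpleGraph (Fin 6 × ZMod k) where
  Adj u v := u.1 ≠ v.1 ∧ v.2 = u.2 + offset u.1 v.1
  symm := ⟨fun _ _ h => ⟨h.1.symm, by rw [offset_swap, h.2]; ring⟩⟩
  loopless := ⟨fun _ h => h.1 rfl⟩

lemma graph_adj {u v : Fin 6 × ZMod k} :
    (graph k).Adj u v ↔ u.1 ≠ v.1 ∧ v.2 = u.2 + offset u.1 v.1 := Iff.rfl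

lemma card_neighborSet (u : Fin 6 × ZMod k) : Nat.card ((graph k).neighborSet u) = 5 := by
  have h : (graph k).neighborSet u =
      Set.range fun s : {s : Fin 6 // u.1 ≠ s} => ((s : Fin 6), u.2 + offset u.1 s) := by
    ext ⟨s, j⟩
    simp [graph_adj, eq_comm]
  rw [h, Nat.card_range_of_injective fun s s' h => Subtype.ext (congrArg Prod.fst h)]
  simp

lemma graph_adj_same_block {t s : Fin 6} (hts : t ≠ s) (h : ¬(t = 3 ∧ s = 2))
    (h' : ¬(t = 2 ∧ s = 3)) (i : ZMod k) : (graph k).Adj (t, i) (s, i) :=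
  ⟨hts, by simp [offset, h, h']⟩

lemma graph_adj_link (i : ZMod k) : (graph k).Adj (3, i) (2, i + 1) :=
  ⟨by simp, by simp [offset]⟩

lemma connected [NeZero k] : (graph k).Connected := by
  have hblock : ∀ u : Fin 6 × ZMod k, (graph k).Reachable (0, u.2) u := by
    rintro ⟨t, i⟩
    obtain rfl | ht := eq_or_ne t 0
    · rfl
    · exact (graph_adj_same_block (Ne.symm ht) (by simp) (by simp) i).reachable
  have hstep : ∀ i : ZMod k, (graph k).Reachable (0, i) (0, i + 1) := fun i =>
    (graph_adj_same_block (t := 0) (s := 3) (by decide) (by decide) (by decide) i).reachable.trans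
      ((graph_adj_link i).reachable.trans
        (graph_adj_same_block (t := 2) (s := 0) (by decide) (by decide) (by decide) _).reachable)
  have hcycle : ∀ n : ℕ, (graph k).Reachable (0, 0) (0, (n : ZMod k)) := by
    intro n
    induction n with
    | zero => simp
    | succ n ih => simpa using ih.trans (hstep n)
  refine (SimpleGraph.connected_iff_exists_forall_reachable _).mpr ⟨(0, 0), fun u => ?_⟩
  exact (hcycle u.2.val).trans (by simpa using hblock u)

def block (i : ZMod k) : Finset (Fin 6 × ZMod k) := Finset.univ ×ˢ {i}

@[simp] lemma mem_block {u : Fin 6 × ZMod k} {i : ZMod k} : u ∈ block i ↔ u.2 = i := by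
  obtain ⟨t, j⟩ := u
  simp [block, eq_comm]

def link (i : ZMod k) : Sym2 (Fin 6 × ZMod k) := s((3, i), (2, i + 1))

lemma edgeSet_subset [NeZero k] :
    (graph k).edgeSet ⊆
      ⋃ i ∈ (Finset.univ : Finset (ZMod k)), ((block i : Set _).sym2 ∪ {link i}) := by
  intro e he
  induction e using Sym2.ind with
  | h u v =>
    obtain ⟨t, i⟩ := u
    obtain ⟨s, j⟩ := v
    obtain ⟨-, hj : j = i + offset t s⟩ := he
    simp only [Finset.mem_univ, Set.iUnion_true, Set.mem_iUnion, Set.mem_union,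
      Set.mk_mem_sym2_iff, Finset.mem_coe, mem_block, Set.mem_singleton_iff, link]
    unfold offset at hj
    split_ifs at hj with h₁ h₂
    · obtain ⟨rfl, rfl⟩ := h₁
      exact ⟨i, Or.inr (by rw [hj])⟩
    · obtain ⟨rfl, rfl⟩ := h₂
      refine ⟨j, Or.inr ?_⟩
      rw [Sym2.eq_swap, hj, neg_add_cancel_right]
    · exact ⟨i, Or.inl ⟨rfl, by simpa using hj⟩⟩

lemma rankOf_graph_le [NeZero k] (p : Fin 6 × ZMod k → ℝ × ℝ) :
    rankOf p (graph k).edgeSet ≤ 10 * k := by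
  calc rankOf p (graph k).edgeSet
      ≤ ∑ i : ZMod k, rankOf p ((block i : Set _).sym2 ∪ {link i}) :=
        (rankOf_mono p edgeSet_subset).trans (rankOf_biUnion_le p _ _)
    _ ≤ ∑ _i : ZMod k, (2 * 6 - 3 + 1) := by
        refine Finset.sum_le_sum fun i _ => (rankOf_union_le p _ _).trans ?_
        refine add_le_add ((rankOf_sym2_le p (block i)).trans ?_) (rankOf_singleton_le p _)
        simp [block]
    _ = 10 * k := by simp [mul_comm]

/-- No three points of a block are collinear, as they lie on a parabola; the shift by `i.val`
keeps the torque of link `i` about `(2, i)` from vanishing. -/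
def realization (k : ℕ) (u : Fin 6 × ZMod k) : ℝ × ℝ :=
  (((u.1 : ℕ) : ℝ), ((u.1 : ℕ) : ℝ) ^ 2 + u.2.val)

def blockBook (i : ZMod k) : Set (Sym2 (Fin 6 × ZMod k)) :=
  book (0, i) (1, i) ({2, 3, 4, 5} ×ˢ {i})

lemma blockBook_subset_edgeSet (i : ZMod k) : blockBook i ⊆ (graph k).edgeSet := by
  intro e he
  simp only [blockBook, book, Set.mem_insert_iff, Set.mem_iUnion, Finset.mem_product,
    Finset.mem_insert, Finset.mem_singleton, Set.mem_singleton_iff] at he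
  rcases he with rfl | ⟨⟨t, j⟩, ⟨ht, rfl⟩, rfl | rfl⟩
  · exact graph_adj_same_block (by decide) (by decide) (by decide) i
  all_goals
    rcases ht with rfl | rfl | rfl | rfl <;>
      exact graph_adj_same_block (by decide) (by decide) (by decide) _

lemma snd_eq_of_mem_blockBook {i : ZMod k} {e : Sym2 (Fin 6 × ZMod k)} (he : e ∈ blockBook i)
    {v : Fin 6 × ZMod k} (hv : v ∈ e) : v.2 = i := by
  have := mem_of_mem_book he hv
  simp only [Set.mem_insert_iff, Finset.coe_product, Set.mem_prod] at this
  aesop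

lemma rankOf_biUnion_blockBook [NeZero k] (s : Finset (ZMod k)) :
    9 * s.card ≤ rankOf (realization k) (⋃ i ∈ s, blockBook i) := by
  induction s using Finset.induction_on with
  | empty => simp
  | insert j s hj ih =>
    have hF : ∀ e ∈ ⋃ i ∈ s, blockBook i, ∀ v ∈ e,
        v ∉ insert (0, j) (insert (1, j)
          (({2, 3, 4, 5} ×ˢ {j} : Finset (Fin 6 × ZMod k)) : Set (Fin 6 × ZMod k))) := by
      intro e he v hv hvj
      simp only [Set.mem_iUnion] at he
      obtain ⟨i, hi, he⟩ := he
      have : v.2 = j := by simp at hvj; aesop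
      exact hj ((snd_eq_of_mem_blockBook he hv).symm.trans this ▸ hi)
    have hab : realization k (0, j) ≠ realization k (1, j) := by
      simp [realization, Prod.ext_iff]
    have hT : ∀ t ∈ ({2, 3, 4, 5} ×ˢ {j} : Finset (Fin 6 × ZMod k)), LinearIndependent ℝ
        ![realization k t - realization k (0, j), realization k t - realization k (1, j)] := by
      intro t ht
      simp only [Finset.mem_product, Finset.mem_insert, Finset.mem_singleton] at ht
      obtain ⟨ht, hj⟩ := ht
      apply linearIndependent_pair_of_wedge_ne_zero
      rcases ht with h | h | h | h <;> norm_num [realization, wedge_apply, h, hj]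
    have h := rankOf_add_le_rankOf_union_book (realization k) hF hab hT
    rw [show ({2, 3, 4, 5} ×ˢ {j} : Finset (Fin 6 × ZMod k)).card = 4 by simp] at h
    rw [Finset.set_biUnion_insert, Set.union_comm, Finset.card_insert_of_notMem hj]
    exact le_trans (by omega) h

lemma wedge_realization_link [NeZero k] {i : ZMod k} (hi : i + 1 ≠ i) :
    wedge (realization k (3, i) - realization k (2, i + 1))
      (realization k (3, i) - realization k (2, i)) ≠ 0 := by
  have hval : ((i + 1).val : ℝ) ≠ i.val := by
    exact_mod_cast fun h => hi (ZMod.val_injective k h)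
  simp only [realization, wedge_apply, Prod.fst_sub, Prod.snd_sub]
  norm_num [-ZMod.natCast_val]
  contrapose! hval
  linarith

lemma rankOf_add_card_le_rankOf_union_links [NeZero k] (hk : 2 ≤ k) :
    rankOf (realization k) (⋃ i ∈ (Finset.univ : Finset (ZMod k)), blockBook i) + k ≤
      rankOf (realization k) ((⋃ i ∈ (Finset.univ : Finset (ZMod k)), blockBook i) ∪
        ⋃ i ∈ (Finset.univ : Finset (ZMod k)), {link i}) := by
  have : Nontrivial (ZMod k) := ZMod.nontrivial_iff.mpr (by omega)
  have hsucc : ∀ i : ZMod k, i + 1 ≠ i := fun i => add_ne_left.mpr one_ne_zero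
  set p := realization k
  have h := rankOf_add_card_le_rankOf_union p (F := ⋃ i ∈ Finset.univ, blockBook i) Finset.univ
    (fun i => (3, i)) (fun i => (2, i + 1)) (fun i => torque p (block i) (p (2, i))) ?_ ?_ ?_
  · simpa [link] using h
  · rintro i - _ ⟨a, b, hab, rfl⟩
    simp only [Set.mem_iUnion] at hab
    obtain ⟨j, -, hab⟩ := hab
    refine torque_edgeVec_eq_zero p _ ?_ _
    simp [mem_block, snd_eq_of_mem_blockBook hab (Sym2.mem_mk_left a b),
      snd_eq_of_mem_blockBook hab (Sym2.mem_mk_right a b)]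
  · rintro i - j - hji
    by_cases h : j + 1 = i
    -- link `j` ends at `(2, i)`, the centre of the torque, so its moment arm is zero
    · rw [edgeVec_comm, torque_edgeVec_of_mem_of_notMem p _ (by simp [h]) (by simpa using hji),
        h, sub_self, map_zero]
    · exact torque_edgeVec_eq_zero p _ (iff_of_false (by simpa using hji) (by simp [h])) _
  · rintro i -
    rw [torque_edgeVec_of_mem_of_notMem p _ (by simp) (by simp [hsucc i])]
    exact wedge_realization_link (hsucc i)

lemma le_rankOf_realization [NeZero k] (hk : 2 ≤ k) :
    10 * k ≤ rankOf (realization k) (graph k).edgeSet := by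
  have hsub : (⋃ i ∈ (Finset.univ : Finset (ZMod k)), blockBook i) ∪
      ⋃ i ∈ (Finset.univ : Finset (ZMod k)), {link i} ⊆ (graph k).edgeSet := by
    refine Set.union_subset (Set.iUnion₂_subset fun i _ => blockBook_subset_edgeSet i)
      (Set.iUnion₂_subset fun i _ => Set.singleton_subset_iff.mpr (graph_adj_link i))
  calc 10 * k = 9 * (Finset.univ : Finset (ZMod k)).card + k := by simp [ZMod.card]; ring
    _ ≤ _ := Nat.add_le_add_right (rankOf_biUnion_blockBook _) k
    _ ≤ _ := rankOf_add_card_le_rankOf_union_links hk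
    _ ≤ _ := rankOf_mono _ hsub

lemma genRank_graph [NeZero k] (hk : 2 ≤ k) : genRank (graph k) = 10 * k :=
  genRankSet_eq_of_forall_le rankOf_graph_le (realization k) (le_rankOf_realization hk)

end BlockCycle

/-- For every `k ≥ 2` there is a connected 5-regular simple graph on `6k` vertices whose
generic rank equals `10k`; so the order of the bound `r(G) ≥ (5/3)|V| - 1` is sharp. -/
theorem exists_five_regular_genRank_eq (k : ℕ) (hk : 2 ≤ k) :
    ∃ G : SimpleGraph (Fin (6 * k)),
      G.Connected ∧ (∀ v, Nat.card (G.neighborSet v) = 5) ∧ genRank G = 10 * k := by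
  have : NeZero k := ⟨by omega⟩
  let e : Fin 6 × ZMod k ≃ Fin (6 * k) :=
    ((Equiv.refl _).prodCongr (ZMod.finEquiv k).symm.toEquiv).trans finProdFinEquiv
  let φ := SimpleGraph.Iso.map e (BlockCycle.graph k)
  refine ⟨_, φ.connected_iff.mp BlockCycle.connected, fun v => ?_,
    φ.genRank_eq.symm.trans (BlockCycle.genRank_graph hk)⟩
  obtain ⟨u, rfl⟩ := e.surjective v
  exact (Nat.card_congr (φ.mapNeighborSet u)).symm.trans (BlockCycle.card_neighborSet u)
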